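/- Let τ be a self-nested finite unordered rooted tree. Identify its height profile with the integer-valued array ρ_τ(h1,h2) (all components of each entry being equal). Define the sequence N by N(0) = 1 and, for 1 ≤ H ≤ H(τ), N(H) = 1 + Σ_{h=0}^{H-1} ρ_τ(H,h)·N(h). Then the number of vertices of τ equals N(H(τ)). -/
import Mathlib


/-- A finite rooted tree whose vertices form a finite subset `supp` of `ℕ`.
`par` maps each vertex to its parent; the root is a fixed point of `par`
(so it has no parent), and every vertex reaches the root by iterating `par`
(connectedness / acyclicity). -/
structure FTree where
  supp : Finset ℕ
  root : ℕ
  root_mem : root ∈ supp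
  par : ℕ → ℕ
  par_mem : ∀ v ∈ supp, par v ∈ supp
  par_root : par root = root
  reach : ∀ v ∈ supp, ∃ n, par^[n] v = root

namespace FTree

/-- Depth of a vertex: least number of parent steps needed to reach the root. -/
noncomputable def depth (t : FTree) (v : ℕ) : ℕ :=
  if h : v ∈ t.supp then Nat.find (t.reach v h) else 0

/-- `w` is a (weak) descendant of `v` in `t`. -/
def IsDesc (t : FTree) (v w : ℕ) : Prop :=
  w ∈ t.supp ∧ ∃ n ≤ t.depth w, t.par^[n] w = v

open Classical in
/-- Vertex set of the subtree `t[v]` rooted at `v`. -/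
noncomputable def desc (t : FTree) (v : ℕ) : Finset ℕ :=
  t.supp.filter (fun w => t.IsDesc v w)

/-- Height of the subtree `t[v]` rooted at `v`. -/
noncomputable def heightAt (t : FTree) (v : ℕ) : ℕ :=
  (t.desc v).sup (fun w => t.depth w) - t.depth v

/-- Height of the tree. -/
noncomputable def height (t : FTree) : ℕ := t.heightAt t.root

/-- The set of children of `v` in `t`. -/
def children (t : FTree) (v : ℕ) : Finset ℕ :=
  t.supp.filter (fun w => t.par w = v ∧ w ≠ t.root)

open Classical in
/-- `γ_h(v)`: number of children of `v` whose subtree has height `h`. -/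
noncomputable def gam (t : FTree) (v h : ℕ) : ℕ :=
  ((t.children v).filter (fun c => t.heightAt c = h)).card

/-- The subtree of `t` rooted at `v` is isomorphic (as an unordered rooted tree)
to the subtree of `s` rooted at `w`: a bijection between the vertex sets sending
root to root and commuting with the parent maps (i.e. mapping edges to edges). -/
def SubtreeIso (t : FTree) (v : ℕ) (s : FTree) (w : ℕ) : Prop :=
  ∃ φ : ℕ → ℕ, Set.BijOn φ (t.desc v : Set ℕ) (s.desc w : Set ℕ) ∧ φ v = w ∧
    ∀ x ∈ t.desc v, x ≠ v → φ (t.par x) = s.par (φ x)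

/-- Isomorphism of rooted trees. -/
def TreeIso (t s : FTree) : Prop := SubtreeIso t t.root s s.root

/-- A tree is self-nested if any two of its subtrees of the same height
are isomorphic. -/
def SelfNested (t : FTree) : Prop :=
  ∀ v ∈ t.supp, ∀ w ∈ t.supp, t.heightAt v = t.heightAt w → SubtreeIso t v t w

open Classical in
/-- Height profile entry `ρ_t(h1,h2)`: the multiset (family up to permutation) of
the values `γ_{h2}(v)` over all vertices `v` of `t` with `H(t[v]) = h1`. -/
noncomputable def profile (t : FTree) (h1 h2 : ℕ) : Multiset ℕ :=
  (t.supp.filter (fun v => t.heightAt v = h1)).val.map (fun v => t.gam v h2)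

/-- Number of vertices of `t`. -/
def numV (t : FTree) : ℕ := t.supp.card

/-- `a` is a (weak) ancestor of `b`. -/
def IsAnc (t : FTree) (a b : ℕ) : Prop := ∃ n, t.par^[n] b = a

/-- `a` is a proper ancestor of `b`. -/
def ProperAnc (t : FTree) (a b : ℕ) : Prop := a ≠ b ∧ t.IsAnc a b

/-- `l` is the least common ancestor of `a` and `b`. -/
def IsLCA (t : FTree) (a b l : ℕ) : Prop :=
  l ∈ t.supp ∧ t.IsAnc l a ∧ t.IsAnc l b ∧
    ∀ m ∈ t.supp, t.IsAnc m a → t.IsAnc m b → t.IsAnc m l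

/-- `φ`, restricted to the domain `D ⊆ t.supp`, is a constrained mapping in the
sense of Zhang from `t` to `s`: a one-to-one correspondence preserving the
ancestor order, satisfying moreover Zhang's condition on least common ancestors. -/
def ZhangMapping (t s : FTree) (D : Finset ℕ) (φ : ℕ → ℕ) : Prop :=
  D ⊆ t.supp ∧ (∀ x ∈ D, φ x ∈ s.supp) ∧ Set.InjOn φ (D : Set ℕ) ∧
  (∀ a ∈ D, ∀ b ∈ D, (t.ProperAnc a b ↔ s.ProperAnc (φ a) (φ b))) ∧
  (∀ v1 ∈ D, ∀ v2 ∈ D, ∀ v3 ∈ D, ∀ l l',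
    t.IsLCA v1 v2 l → s.IsLCA (φ v1) (φ v2) l' →
    (t.ProperAnc l v3 ↔ s.ProperAnc l' (φ v3)))

/-- Allowed inserting operation (AI): adding a new internal vertex `w` as a child of
`v`, making `w` the parent of the child `c` of `v`; allowed only if
`H(t[c]) + 1 < H(t[v])`. -/
def InsertAI (t θ : FTree) : Prop :=
  ∃ v c w, v ∈ t.supp ∧ c ∈ t.children v ∧ w ∉ t.supp ∧
    t.heightAt c + 1 < t.heightAt v ∧
    θ.supp = insert w t.supp ∧ θ.root = t.root ∧
    θ.par w = v ∧ θ.par c = w ∧ ∀ x ∈ t.supp, x ≠ c → θ.par x = t.par x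

/-- Allowed inserting operation (AS): attaching a tree `s` as a new child subtree of
`v`; allowed only if `H(s) + 1 ≤ H(t[v])`. -/
def InsertAS (t θ : FTree) : Prop :=
  ∃ (v : ℕ) (s : FTree), v ∈ t.supp ∧ Disjoint s.supp t.supp ∧
    s.height + 1 ≤ t.heightAt v ∧
    θ.supp = t.supp ∪ s.supp ∧ θ.root = t.root ∧ θ.par s.root = v ∧
    (∀ x ∈ t.supp, θ.par x = t.par x) ∧ (∀ x ∈ s.supp, x ≠ s.root → θ.par x = s.par x)

/-- One allowed inserting operation. -/
def InsertStep (t θ : FTree) : Prop := InsertAI t θ ∨ InsertAS t θ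

/-- Allowed deleting operation (DI): deleting an internal vertex `v`, child of `u`,
having a unique child `c` (which becomes a child of `u`); allowed only if `u` has
another child `v'` with `H(t[v']) ≥ H(t[v])`. -/
def DeleteDI (t θ : FTree) : Prop :=
  ∃ u v c, v ∈ t.children u ∧ t.children v = {c} ∧
    (∃ v' ∈ t.children u, v' ≠ v ∧ t.heightAt v ≤ t.heightAt v') ∧
    θ.supp = t.supp.erase v ∧ θ.root = t.root ∧ θ.par c = u ∧
    ∀ x ∈ t.supp, x ≠ v → x ≠ c → θ.par x = t.par x

/-- Allowed deleting operation (DS): deleting the whole subtree rooted at a child `w`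
of `v`; allowed only if `v` has another child `w'` with `H(t[w']) + 1 = H(t[v])`. -/
def DeleteDS (t θ : FTree) : Prop :=
  ∃ v w, w ∈ t.children v ∧
    (∃ w' ∈ t.children v, w' ≠ w ∧ t.heightAt w' + 1 = t.heightAt v) ∧
    θ.supp = t.supp \ t.desc w ∧ θ.root = t.root ∧
    ∀ x ∈ θ.supp, θ.par x = t.par x

/-- One allowed deleting operation. -/
def DeleteStep (t θ : FTree) : Prop := DeleteDI t θ ∨ DeleteDS t θ

/-- A general single-vertex inserting operation: a new vertex `w` is added as a child
of `v`, and the vertices of a subset `C` of the children of `v` become children of `w`. -/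
def GeneralInsert (t θ : FTree) : Prop :=
  ∃ (v w : ℕ) (C : Finset ℕ), v ∈ t.supp ∧ w ∉ t.supp ∧ C ⊆ t.children v ∧
    θ.supp = insert w t.supp ∧ θ.root = t.root ∧ θ.par w = v ∧
    (∀ x ∈ C, θ.par x = w) ∧ ∀ x ∈ t.supp, x ∉ C → θ.par x = t.par x

/-- Cost of a constrained mapping with domain `D`: vertices of `t` not in the domain
are deleted, vertices of `s` not in the image are inserted (unit costs). -/
def mappingCost (t s : FTree) (D : Finset ℕ) (φ : ℕ → ℕ) : ℕ :=
  (t.numV - D.card) + (s.numV - (D.image φ).card)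

/-- Zhang's constrained edit distance between unordered trees: the minimal cost
associated with a constrained mapping between `t` and `s`. -/
noncomputable def DZ (t s : FTree) : ℕ :=
  sInf { c | ∃ (D : Finset ℕ) (φ : ℕ → ℕ), ZhangMapping t s D φ ∧ c = mappingCost t s D φ }

end FTree

namespace FTree

variable (t : FTree)

lemma iterate_mem (n : ℕ) : ∀ v ∈ t.supp, t.par^[n] v ∈ t.supp := by
  induction n with
  | zero => simp
  | succ n ih =>
    intro v hv
    rw [Function.iterate_succ_apply]
    exact ih _ (t.par_mem v hv)

lemma depth_eq {v} (hv : v ∈ t.supp) : t.depth v = Nat.find (t.reach v hv) := by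
  simp [depth, hv]

lemma depth_spec {v} (hv : v ∈ t.supp) : t.par^[t.depth v] v = t.root := by
  rw [t.depth_eq hv]; exact Nat.find_spec (t.reach v hv)

lemma depth_min {v} (hv : v ∈ t.supp) {n} (hn : t.par^[n] v = t.root) : t.depth v ≤ n := by
  rw [t.depth_eq hv]; exact Nat.find_min' _ hn

lemma depth_root : t.depth t.root = 0 :=
  Nat.le_zero.mp (t.depth_min t.root_mem (by simp))

lemma depth_par {v} (hv : v ∈ t.supp) (hvr : v ≠ t.root) :
    t.depth v = t.depth (t.par v) + 1 := by
  have hp : t.par v ∈ t.supp := t.par_mem v hv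
  have h1 : t.depth v ≤ t.depth (t.par v) + 1 := by
    apply t.depth_min hv
    rw [Function.iterate_succ_apply]
    exact t.depth_spec hp
  have h0 : 0 < t.depth v := by
    rcases Nat.eq_zero_or_pos (t.depth v) with h | h
    · exfalso; apply hvr; have := t.depth_spec hv; rwa [h] at this
    · exact h
  have h2 : t.depth (t.par v) ≤ t.depth v - 1 := by
    apply t.depth_min hp
    have hs := t.depth_spec hv
    rw [← Nat.succ_pred_eq_of_pos h0, Function.iterate_succ_apply] at hs
    exact hs
  omega

lemma depth_iterate : ∀ n, ∀ v ∈ t.supp, n ≤ t.depth v →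
    t.depth (t.par^[n] v) = t.depth v - n := by
  intro n
  induction n with
  | zero => intro v hv _; simp
  | succ n ih =>
    intro v hv hn
    have hvr : v ≠ t.root := by
      intro h; rw [h, t.depth_root] at hn; omega
    have hd := t.depth_par hv hvr
    rw [Function.iterate_succ_apply, ih (t.par v) (t.par_mem v hv) (by omega)]
    omega

lemma mem_desc {v w} : w ∈ t.desc v ↔ w ∈ t.supp ∧ ∃ n ≤ t.depth w, t.par^[n] w = v := by
  classical
  unfold desc
  rw [Finset.mem_filter]
  unfold IsDesc
  tauto

lemma desc_subset_supp (v : ℕ) : t.desc v ⊆ t.supp :=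
  fun w hw => (t.mem_desc.mp hw).1

lemma mem_desc_props {v w} (h : w ∈ t.desc v) :
    v ∈ t.supp ∧ t.depth v ≤ t.depth w ∧ t.par^[t.depth w - t.depth v] w = v := by
  rw [t.mem_desc] at h
  obtain ⟨hw, n, hn, hpn⟩ := h
  have hvmem : v ∈ t.supp := hpn ▸ t.iterate_mem n w hw
  have hd : t.depth (t.par^[n] w) = t.depth w - n := t.depth_iterate n w hw hn
  rw [hpn] at hd
  refine ⟨hvmem, by omega, ?_⟩
  have hh : t.depth w - t.depth v = n := by omega
  rw [hh, hpn]

lemma self_mem_desc {v} (hv : v ∈ t.supp) : v ∈ t.desc v := by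
  rw [t.mem_desc]; exact ⟨hv, 0, Nat.zero_le _, rfl⟩

lemma mem_children {v c} : c ∈ t.children v ↔ c ∈ t.supp ∧ t.par c = v ∧ c ≠ t.root := by
  simp [children]

lemma child_mem_supp {v c} (hc : c ∈ t.children v) : c ∈ t.supp :=
  (t.mem_children.mp hc).1

lemma depth_child {v c} (hc : c ∈ t.children v) : t.depth c = t.depth v + 1 := by
  rw [t.mem_children] at hc
  obtain ⟨h1, h2, h3⟩ := hc
  rw [t.depth_par h1 h3, h2]

lemma desc_child_subset {v c} (hc : c ∈ t.children v) : t.desc c ⊆ t.desc v := by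
  intro w hw
  obtain ⟨hcs, hle, hit⟩ := t.mem_desc_props hw
  have hws : w ∈ t.supp := t.desc_subset_supp c hw
  have hdc := t.depth_child hc
  have hpc : t.par c = v := (t.mem_children.mp hc).2.1
  rw [t.mem_desc]
  refine ⟨hws, t.depth w - t.depth c + 1, by omega, ?_⟩
  rw [Function.iterate_succ_apply', hit, hpc]

lemma desc_eq_insert_biUnion {v} (hv : v ∈ t.supp) :
    t.desc v = insert v ((t.children v).biUnion (fun c => t.desc c)) := by
  classical
  apply Finset.ext
  intro w
  simp only [Finset.mem_insert, Finset.mem_biUnion]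
  constructor
  · intro hw
    obtain ⟨_, hle, hit⟩ := t.mem_desc_props hw
    have hws : w ∈ t.supp := t.desc_subset_supp v hw
    by_cases hwv : w = v
    · left; exact hwv
    · right
      have hlt : t.depth v < t.depth w := by
        rcases Nat.lt_or_ge (t.depth v) (t.depth w) with h | h
        · exact h
        · exfalso; apply hwv
          have hz : t.depth w - t.depth v = 0 := by omega
          rw [hz] at hit
          simpa using hit
      set k := t.depth w - t.depth v with hk
      have hk1 : 1 ≤ k := by omega
      set c := t.par^[k-1] w with hcdef
      have hcs : c ∈ t.supp := t.iterate_mem _ w hws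
      have hpc : t.par c = v := by
        have h : t.par^[(k-1)+1] w = t.par (t.par^[k-1] w) :=
          Function.iterate_succ_apply' _ _ _
        have hk' : k - 1 + 1 = k := by omega
        rw [hk', hit] at h
        exact h.symm
      have hdepc : t.depth c = t.depth w - (k-1) := t.depth_iterate _ w hws (by omega)
      have hcr : c ≠ t.root := by
        intro h
        rw [h, t.depth_root] at hdepc
        omega
      refine ⟨c, t.mem_children.mpr ⟨hcs, hpc, hcr⟩, ?_⟩
      rw [t.mem_desc]
      exact ⟨hws, k-1, by omega, rfl⟩
  · intro hw
    rcases hw with rfl | ⟨c, hc, hw⟩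
    · exact t.self_mem_desc hv
    · exact t.desc_child_subset hc hw

lemma notMem_desc_child {v c} (hc : c ∈ t.children v) : v ∉ t.desc c := by
  intro h
  obtain ⟨_, hle, _⟩ := t.mem_desc_props h
  have := t.depth_child hc
  omega

lemma desc_children_disjoint {v c c'} (hc : c ∈ t.children v) (hc' : c' ∈ t.children v)
    (hne : c ≠ c') : Disjoint (t.desc c) (t.desc c') := by
  rw [Finset.disjoint_left]
  intro w hw hw'
  obtain ⟨_, hle, hit⟩ := t.mem_desc_props hw
  obtain ⟨_, hle', hit'⟩ := t.mem_desc_props hw'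
  have h1 := t.depth_child hc
  have h2 := t.depth_child hc'
  apply hne
  rw [← hit, ← hit', h1, h2]

lemma card_desc {v} (hv : v ∈ t.supp) :
    (t.desc v).card = 1 + ∑ c ∈ t.children v, (t.desc c).card := by
  classical
  rw [t.desc_eq_insert_biUnion hv,
    Finset.card_insert_of_notMem (by
      simp only [Finset.mem_biUnion, not_exists, not_and]
      intro c hc
      exact t.notMem_desc_child hc),
    Finset.card_biUnion (fun c hc c' hc' hne => t.desc_children_disjoint hc hc' hne)]
  omega

lemma heightAt_child_lt {v c} (hv : v ∈ t.supp) (hc : c ∈ t.children v) :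
    t.heightAt c < t.heightAt v := by
  have hcs := t.child_mem_supp hc
  have h1 : (t.desc c).sup (fun w => t.depth w) ≤ (t.desc v).sup (fun w => t.depth w) :=
    Finset.sup_mono (t.desc_child_subset hc)
  have h2 : t.depth c ≤ (t.desc c).sup (fun w => t.depth w) :=
    Finset.le_sup (t.self_mem_desc hcs)
  have h3 := t.depth_child hc
  unfold heightAt
  omega

lemma desc_eq_singleton_of_heightAt_zero {v} (hv : v ∈ t.supp) (h : t.heightAt v = 0) :
    t.desc v = {v} := by
  have h1 : t.depth v ≤ (t.desc v).sup (fun w => t.depth w) :=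
    Finset.le_sup (t.self_mem_desc hv)
  have hsup : (t.desc v).sup (fun w => t.depth w) = t.depth v := by
    unfold heightAt at h
    omega
  apply Finset.ext
  intro w
  simp only [Finset.mem_singleton]
  constructor
  · intro hw
    obtain ⟨_, hle, hit⟩ := t.mem_desc_props hw
    have h2 : t.depth w ≤ t.depth v :=
      hsup ▸ Finset.le_sup (f := fun w => t.depth w) hw
    have hz : t.depth w - t.depth v = 0 := by omega
    rw [hz] at hit
    simpa using hit
  · rintro rfl; exact t.self_mem_desc hv

lemma desc_root : t.desc t.root = t.supp := by
  apply Finset.Subset.antisymm (t.desc_subset_supp _)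
  intro w hw
  rw [t.mem_desc]
  exact ⟨hw, t.depth w, le_refl _, t.depth_spec hw⟩

lemma heightAt_le_height {v} (hv : v ∈ t.supp) : t.heightAt v ≤ t.height := by
  unfold height heightAt
  rw [t.desc_root, t.depth_root]
  have h1 : (t.desc v).sup (fun w => t.depth w) ≤ t.supp.sup (fun w => t.depth w) :=
    Finset.sup_mono (t.desc_subset_supp v)
  omega

end FTree

/-- Let `t` be a self-nested tree and identify its height profile with
the integer-valued array `r h1 h2` (all components of each entry `ρ_t(h1,h2)` are equal
to `r h1 h2`). If `N 0 = 1` and `N H = 1 + Σ_{h=0}^{H-1} r H h * N h` for every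
`1 ≤ H ≤ H(t)`, then the number of vertices of `t` equals `N (H(t))`. -/
theorem numV_selfNested_eq (t : FTree) (ht : t.SelfNested) (r : ℕ → ℕ → ℕ) (N : ℕ → ℕ)
    (hr : ∀ h1 h2, h2 < h1 → h1 ≤ t.height →
      ∀ v ∈ t.supp, t.heightAt v = h1 → t.gam v h2 = r h1 h2)
    (hN0 : N 0 = 1)
    (hNrec : ∀ H, 1 ≤ H → H ≤ t.height →
      N H = 1 + ∑ h ∈ Finset.range H, r H h * N h) :
    t.numV = N t.height := by
  classical
  have key : ∀ H, ∀ v ∈ t.supp, t.heightAt v = H → (t.desc v).card = N H := by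
    intro H
    induction H using Nat.strong_induction_on with
    | _ H ih =>
      intro v hv hH
      rcases Nat.eq_zero_or_pos H with rfl | hpos
      · rw [t.desc_eq_singleton_of_heightAt_zero hv hH]
        simp [hN0]
      · have hHle : H ≤ t.height := hH ▸ t.heightAt_le_height hv
        rw [t.card_desc hv]
        have hmaps : ∀ c ∈ t.children v, t.heightAt c ∈ Finset.range H := by
          intro c hc
          rw [Finset.mem_range, ← hH]
          exact t.heightAt_child_lt hv hc
        have hsum : ∑ c ∈ t.children v, (t.desc c).card
            = ∑ h ∈ Finset.range H, t.gam v h * N h := by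
          rw [← Finset.sum_fiberwise_of_maps_to hmaps (fun c => (t.desc c).card)]
          apply Finset.sum_congr rfl
          intro h hh
          rw [Finset.mem_range] at hh
          calc ∑ c ∈ (t.children v).filter (fun c => t.heightAt c = h), (t.desc c).card
              = ∑ _c ∈ (t.children v).filter (fun c => t.heightAt c = h), N h := by
                apply Finset.sum_congr rfl
                intro c hc
                rw [Finset.mem_filter] at hc
                exact ih h hh c (t.child_mem_supp hc.1) hc.2
            _ = t.gam v h * N h := by
                rw [Finset.sum_const, smul_eq_mul]
                simp [FTree.gam]
        rw [hsum, hNrec H hpos hHle]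
        congr 1
        apply Finset.sum_congr rfl
        intro h hh
        rw [Finset.mem_range] at hh
        rw [hr H h hh hHle v hv hH]
  have hroot := key t.height t.root t.root_mem rfl
  unfold FTree.numV
  rw [← t.desc_root, hroot]
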